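/- arXiv:1110.4539 — 2 statements merged into one kernel-verified Lean document; each statement's English description precedes it below -/
import Mathlib

section
/- Two bidirected graphs are Markov equivalent if and only if they are equal. -/
/-- A loopless mixed graph with three kinds of edges: lines (undirected),
arrows (directed, `arrow i j` means `i → j`), and arcs (bidirected). -/
structure MixedGraph (V : Type*) where
  line : V → V → Prop
  arrow : V → V → Prop
  arc : V → V → Prop
  line_symm : ∀ i j, line i j → line j i
  arc_symm : ∀ i j, arc i j → arc j i
  line_irrefl : ∀ i, ¬ line i i
  arrow_irrefl : ∀ i, ¬ arrow i i
  arc_irrefl : ∀ i, ¬ arc i i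

namespace MixedGraph

variable {V : Type*}

/-- `i` and `j` are adjacent (joined by some edge). -/
def adj (G : MixedGraph V) (i j : V) : Prop :=
  G.line i j ∨ G.arrow i j ∨ G.arrow j i ∨ G.arc i j

/-- There is an edge between `i` and `j` with an arrowhead pointing at `j`. -/
def headAt (G : MixedGraph V) (i j : V) : Prop :=
  G.arrow i j ∨ G.arc i j

/-- `j` is a collider on the V-configuration `⟨i, j, k⟩`. -/
def collider (G : MixedGraph V) (i j k : V) : Prop :=
  G.headAt i j ∧ G.headAt k j

/-- `i` is an ancestor of `j` (a direction-preserving path of arrows from `i` to `j`). -/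
def anc (G : MixedGraph V) (i j : V) : Prop :=
  Relation.ReflTransGen G.arrow i j

/-- A path: a list of pairwise distinct nodes, consecutive ones adjacent. -/
def isPath (G : MixedGraph V) (p : List V) : Prop :=
  p.Nodup ∧ List.Chain' G.adj p

/-- Inner-node condition for an `m`-connecting path given `C`:
every collider inner node is in `C` or an ancestor of a node of `C`,
every non-collider inner node is outside `C`. -/
def innerOK (G : MixedGraph V) (C : Set V) : List V → Prop
  | a :: b :: c :: rest =>
      ((G.collider a b c → b ∈ C ∨ ∃ x ∈ C, G.anc b x) ∧
        (¬ G.collider a b c → b ∉ C)) ∧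
      innerOK G C (b :: c :: rest)
  | _ => True

/-- `p` is an `m`-connecting path between `i` and `j` given `C`. -/
def mConnecting (G : MixedGraph V) (C : Set V) (i j : V) (p : List V) : Prop :=
  G.isPath p ∧ 2 ≤ p.length ∧ p.head? = some i ∧ p.getLast? = some j ∧
    G.innerOK C p

/-- `A` is `m`-separated from `B` given `C`. -/
def mSep (G : MixedGraph V) (A B C : Set V) : Prop :=
  ¬ ∃ (i j : V) (p : List V), i ∈ A ∧ j ∈ B ∧ G.mConnecting C i j p

/-- Two mixed graphs on the same node set are Markov equivalent if they induce
exactly the same `m`-separation statements among disjoint sets. -/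
def markovEquiv (G₁ G₂ : MixedGraph V) : Prop :=
  ∀ A B C : Set V, Disjoint A B → Disjoint A C → Disjoint B C →
    (G₁.mSep A B C ↔ G₂.mSep A B C)

/-- An undirected graph: only line edges. -/
def isUG (G : MixedGraph V) : Prop :=
  (∀ i j, ¬ G.arrow i j) ∧ (∀ i j, ¬ G.arc i j)

/-- A bidirected graph: only arc edges. -/
def isBG (G : MixedGraph V) : Prop :=
  (∀ i j, ¬ G.arrow i j) ∧ (∀ i j, ¬ G.line i j)

/-- A directed acyclic graph: only arrows, and no directed cycle. -/
def isDAG (G : MixedGraph V) : Prop :=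
  (∀ i j, ¬ G.line i j) ∧ (∀ i j, ¬ G.arc i j) ∧ ∀ i, ¬ Relation.TransGen G.arrow i i

/-- An ancestral graph: no node is an ancestor of one of its parents or spouses,
and no arrowhead points at a node having a neighbour. -/
def isAncestral (G : MixedGraph V) : Prop :=
  (∀ i j, (G.arrow j i ∨ G.arc j i) → ¬ G.anc i j) ∧
  (∀ i j k, G.line i j → ¬ G.headAt k i)

/-- Maximality: every pair of distinct non-adjacent nodes can be `m`-separated. -/
def isMaximal (G : MixedGraph V) : Prop :=
  ∀ i j, i ≠ j → ¬ G.adj i j → ∃ C : Set V, i ∉ C ∧ j ∉ C ∧ G.mSep {i} {j} C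

/-- A maximal ancestral graph. -/
def isMAG (G : MixedGraph V) : Prop :=
  G.isAncestral ∧ G.isMaximal

/-- Two graphs have the same skeleton. -/
def sameSkeleton (G₁ G₂ : MixedGraph V) : Prop :=
  ∀ i j, G₁.adj i j ↔ G₂.adj i j

/-- An unshielded collider V-configuration `⟨i, j, k⟩`. -/
def unshieldedCollider (G : MixedGraph V) (i j k : V) : Prop :=
  G.collider i j k ∧ i ≠ k ∧ ¬ G.adj i k

end MixedGraph

/-!
In a bidirected graph every inner node of a path is a collider, so given the empty set a path
is `m`-connecting only if it has no inner node at all. Hence `{i}` and `{j}` are `m`-separated by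
`∅` exactly when `i` and `j` are not adjacent: the separation statements determine the skeleton,
and the skeleton of a bidirected graph is the graph itself.
-/

namespace MixedGraph

variable {V : Type*} {G G₁ G₂ : MixedGraph V}

theorem not_adj_self (G : MixedGraph V) (i : V) : ¬ G.adj i i := by
  rintro (h | h | h | h)
  exacts [G.line_irrefl i h, G.arrow_irrefl i h, G.arrow_irrefl i h, G.arc_irrefl i h]

theorem mConnecting_pair {C : Set V} {i j : V} (hij : i ≠ j) (h : G.adj i j) :
    G.mConnecting C i j [i, j] :=
  ⟨⟨by simp [hij], List.isChain_pair.mpr h⟩, le_rfl, rfl, rfl, trivial⟩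

theorem not_mSep_of_adj {C : Set V} {i j : V} (hij : i ≠ j) (h : G.adj i j) :
    ¬ G.mSep {i} {j} C :=
  fun hsep ↦ hsep ⟨i, j, [i, j], rfl, rfl, mConnecting_pair hij h⟩

namespace isBG

theorem adj_iff (h : G.isBG) {i j : V} : G.adj i j ↔ G.arc i j := by
  refine ⟨?_, fun hc ↦ .inr <| .inr <| .inr hc⟩
  rintro (hl | ha | ha | hc)
  exacts [(h.2 i j hl).elim, (h.1 i j ha).elim, (h.1 j i ha).elim, hc]

theorem collider_of_adj (h : G.isBG) {a b c : V} (hab : G.adj a b) (hbc : G.adj b c) :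
    G.collider a b c :=
  ⟨.inr (h.adj_iff.mp hab), .inr (G.arc_symm b c (h.adj_iff.mp hbc))⟩

theorem not_innerOK_empty (h : G.isBG) {a b c : V} {rest : List V}
    (hp : List.IsChain G.adj (a :: b :: c :: rest)) : ¬ G.innerOK ∅ (a :: b :: c :: rest) := by
  obtain ⟨hab, hbc, -⟩ := List.isChain_cons_cons.mp hp |>.imp_right List.isChain_cons_cons.mp
  intro hinner
  rcases hinner.1.1 (h.collider_of_adj hab hbc) with hb | ⟨_, hx, -⟩
  exacts [hb, hx]

theorem adj_of_mConnecting_empty (h : G.isBG) {i j : V} {p : List V}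
    (hp : G.mConnecting ∅ i j p) : G.adj i j := by
  obtain ⟨⟨-, hchain⟩, hlen, hhead, hlast, hinner⟩ := hp
  match p, hchain, hlen, hhead, hlast, hinner with
  | [a, b], hchain, _, hhead, hlast, _ =>
    cases hhead; cases hlast
    exact List.isChain_pair.mp hchain
  | _ :: _ :: _ :: _, hchain, _, _, _, hinner => exact (h.not_innerOK_empty hchain hinner).elim

theorem mSep_singleton_empty_iff (h : G.isBG) {i j : V} (hij : i ≠ j) :
    G.mSep {i} {j} ∅ ↔ ¬ G.adj i j := by
  refine ⟨fun hsep hadj ↦ not_mSep_of_adj hij hadj hsep, fun hadj ↦ ?_⟩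
  rintro ⟨_, _, p, rfl, rfl, hp⟩
  exact hadj (h.adj_of_mConnecting_empty hp)

theorem sameSkeleton_of_markovEquiv (h₁ : G₁.isBG) (h₂ : G₂.isBG) (h : G₁.markovEquiv G₂) :
    G₁.sameSkeleton G₂ := by
  intro i j
  by_cases hij : i = j
  · subst hij
    exact iff_of_false (G₁.not_adj_self i) (G₂.not_adj_self i)
  have hsep := h {i} {j} ∅ (Set.disjoint_singleton.mpr hij) (Set.disjoint_empty _)
    (Set.disjoint_empty _)
  rw [h₁.mSep_singleton_empty_iff hij, h₂.mSep_singleton_empty_iff hij] at hsep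
  exact not_iff_not.mp hsep

theorem eq_of_sameSkeleton (h₁ : G₁.isBG) (h₂ : G₂.isBG) (h : G₁.sameSkeleton G₂) :
    G₁ = G₂ := by
  obtain ⟨l₁, a₁, c₁, _, _, _, _, _⟩ := G₁
  obtain ⟨l₂, a₂, c₂, _, _, _, _, _⟩ := G₂
  have hl : l₁ = l₂ := by
    funext i j
    exact propext (iff_of_false (h₁.2 i j) (h₂.2 i j))
  have ha : a₁ = a₂ := by
    funext i j
    exact propext (iff_of_false (h₁.1 i j) (h₂.1 i j))
  have hc : c₁ = c₂ := by
    funext i j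
    exact propext (h₁.adj_iff.symm.trans ((h i j).trans h₂.adj_iff))
  subst hl ha hc
  rfl

end isBG

end MixedGraph

theorem bg_markovEquiv_iff_eq_general {V : Type*} (G₁ G₂ : MixedGraph V)
    (h₁ : G₁.isBG) (h₂ : G₂.isBG) :
    G₁.markovEquiv G₂ ↔ G₁ = G₂ := by
  refine ⟨fun h ↦ h₁.eq_of_sameSkeleton h₂ (h₁.sameSkeleton_of_markovEquiv h₂ h), ?_⟩
  rintro rfl _ _ _ _ _ _
  rfl

/-- Two bidirected graphs are Markov equivalent if and only if they are equal. -/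
theorem bg_markovEquiv_iff_eq {V : Type*} [Fintype V] (G₁ G₂ : MixedGraph V)
    (h₁ : G₁.isBG) (h₂ : G₂.isBG) :
    G₁.markovEquiv G₂ ↔ G₁ = G₂ :=
  bg_markovEquiv_iff_eq_general G₁ G₂ h₁ h₂
end

section
/- Two directed acyclic graphs are Markov equivalent if and only if they have the same skeleton and the same unshielded colliders (i.e., the same triples (i, j, k) with i → j ← k and i not adjacent to k). -/
namespace MixedGraph
variable {V : Type*}

/-- An unshielded collision V-configuration `i → j ← k` with `i, k` non-adjacent. -/
def unshieldedCollision (G : MixedGraph V) (i j k : V) : Prop :=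
  G.arrow i j ∧ G.arrow k j ∧ i ≠ k ∧ ¬ G.adj i k

end MixedGraph

/-!
Necessity: in a DAG, two non-adjacent nodes are `m`-separated by their proper ancestors. An edge of
`G₁` missing in `G₂`, or an unshielded collision `i → j ← k` of `G₁` whose collider is, in `G₂`, a
parent of `i` or `k`, would give a connecting path against this separator.

Sufficiency: a connecting walk of `G₁` that is minimal, first in length and then in the total
directed distance of its nodes to `C`, is a connecting path of `G₂`. Repeated nodes can be cut
out, since acyclicity keeps the new inner node an ancestor of `C` whenever it becomes a collider.
A triple that blocks in `G₂` is either shielded and can be skipped, or an unshielded collider that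
is an ancestor of `C` in `G₁` only; the common unshielded collisions then force the child on a
shortest directed path into `C` to be a common child of its two neighbours, so it can replace the
collider.
-/

theorem List.exists_eq_append_cons_append_cons_of_not_nodup {α : Type*} {l : List α}
    (h : ¬ l.Nodup) : ∃ e x m f, l = e ++ x :: (m ++ x :: f) := by
  induction l with
  | nil => exact absurd List.nodup_nil h
  | cons a t ih =>
    by_cases ha : a ∈ t
    · obtain ⟨m, f, rfl⟩ := List.append_of_mem ha
      exact ⟨[], a, m, f, rfl⟩
    · obtain ⟨e, x, m, f, rfl⟩ := ih fun hn => h (List.nodup_cons.2 ⟨ha, hn⟩)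
      exact ⟨a :: e, x, m, f, rfl⟩

namespace MixedGraph

open Relation

variable {V : Type*} {G G₁ G₂ : MixedGraph V} {C : Set V} {i j k a b c d e w x y z : V}

lemma adj_symm (h : G.adj i j) : G.adj j i := by
  rcases h with h | h | h | h
  exacts [.inl (G.line_symm _ _ h), .inr (.inr (.inl h)), .inr (.inl h),
    .inr (.inr (.inr (G.arc_symm _ _ h)))]

lemma adj_irrefl (i : V) : ¬ G.adj i i := by
  rintro (h | h | h | h)
  exacts [G.line_irrefl i h, G.arrow_irrefl i h, G.arrow_irrefl i h, G.arc_irrefl i h]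

lemma adj_of_arrow (h : G.arrow i j) : G.adj i j := .inr (.inl h)

lemma adj_of_arrow_rev (h : G.arrow j i) : G.adj i j := .inr (.inr (.inl h))

namespace isDAG

lemma headAt_iff (hG : G.isDAG) : G.headAt i j ↔ G.arrow i j := by
  simp [headAt, hG.2.1 i j]

lemma collider_iff (hG : G.isDAG) : G.collider a b c ↔ G.arrow a b ∧ G.arrow c b := by
  rw [collider, hG.headAt_iff, hG.headAt_iff]

lemma adj_iff (hG : G.isDAG) : G.adj i j ↔ G.arrow i j ∨ G.arrow j i := by
  simp [adj, hG.1 i j, hG.2.1 i j]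

lemma arrow_asymm (hG : G.isDAG) (h : G.arrow i j) : ¬ G.arrow j i :=
  fun h' => hG.2.2 i (.head h (.single h'))

lemma not_anc_of_arrow (hG : G.isDAG) (h : G.arrow i j) : ¬ G.anc j i :=
  fun h' => hG.2.2 j (.tail' h' h)

lemma not_headAt_of_arrow (hG : G.isDAG) (h : G.arrow i j) : ¬ G.headAt j i :=
  fun h' => hG.arrow_asymm h (hG.headAt_iff.1 h')

lemma arrow_of_adj (hG : G.isDAG) (h : G.adj i j) (h' : ¬ G.arrow j i) : G.arrow i j :=
  (hG.adj_iff.1 h).resolve_right h'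

lemma arrow_of_adj_of_arrow_of_arrow (hG : G.isDAG) (hac : G.adj a c) (hab : G.arrow a b)
    (hbc : G.arrow b c) : G.arrow a c :=
  hG.arrow_of_adj hac fun hca => hG.2.2 a (.head hab (.head hbc (.single hca)))

end isDAG

def tripleOK (G : MixedGraph V) (C : Set V) (a b c : V) : Prop :=
  (G.collider a b c → b ∈ C ∨ ∃ x ∈ C, G.anc b x) ∧ (¬ G.collider a b c → b ∉ C)

lemma tripleOK_comm : G.tripleOK C a b c ↔ G.tripleOK C c b a := by
  simp only [tripleOK, collider, and_comm]

lemma collider_comm : G.collider a b c ↔ G.collider c b a := and_comm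

lemma tripleOK_of_not_headAt (hca : ¬ G.headAt c a) (ha : a ∉ C) : G.tripleOK C w a c :=
  ⟨fun hcol => (hca hcol.2).elim, fun _ => ha⟩

lemma tripleOK_of_collider (hcol : G.collider a b c) (hb : ∃ x ∈ C, G.anc b x) :
    G.tripleOK C a b c :=
  ⟨fun _ => .inr hb, fun h => (h hcol).elim⟩

lemma tripleOK_congr (hw : G.tripleOK C w a b) (h : G.headAt c a ↔ G.headAt b a) :
    G.tripleOK C w a c := by
  simpa only [tripleOK, collider, h] using hw

lemma tripleOK_of_anc (hw : G.tripleOK C w a b) (hba : ¬ G.headAt b a)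
    (ha : ∃ x ∈ C, G.anc a x) : G.tripleOK C w a c :=
  ⟨fun _ => .inr ha, fun _ => hw.2 fun h => hba h.2⟩

lemma innerOK_cons_cons {l : List V} :
    G.innerOK C (a :: b :: l) ↔ (∀ c ∈ l.head?, G.tripleOK C a b c) ∧ G.innerOK C (b :: l) := by
  cases l <;> simp [innerOK, tripleOK]

lemma innerOK_append_cons (l₁ : List V) (x : V) (l₂ : List V) :
    G.innerOK C (l₁ ++ x :: l₂) ↔ G.innerOK C (l₁ ++ [x]) ∧ G.innerOK C (x :: l₂) ∧
      ∀ w ∈ l₁.getLast?, ∀ y ∈ l₂.head?, G.tripleOK C w x y := by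
  induction l₁ using List.twoStepInduction with
  | nil => simp [innerOK]
  | singleton w => simp [innerOK_cons_cons, innerOK, and_comm]
  | cons_cons w w' l _ ih =>
    have hhead : (l ++ x :: l₂).head? = (l ++ [x]).head? := by cases l <;> rfl
    simp only [List.cons_append, innerOK_cons_cons, hhead] at ih ⊢
    rw [ih w', List.getLast?_cons_cons]
    tauto

lemma innerOK_reverse : ∀ {l : List V}, G.innerOK C l → G.innerOK C l.reverse
  | [], _ | [_], _ => trivial
  | a :: b :: l, h => by
    rw [innerOK_cons_cons] at h
    have ih := innerOK_reverse h.2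
    simp only [List.reverse_cons, List.append_assoc, List.singleton_append] at ih ⊢
    rw [innerOK_append_cons]
    refine ⟨ih, trivial, fun w hw y hy => ?_⟩
    simp only [List.head?_cons, Option.mem_def, Option.some.injEq] at hy
    rw [List.getLast?_reverse] at hw
    exact tripleOK_comm.1 (hy ▸ h.1 w hw)

def mConnectingWalk (G : MixedGraph V) (C : Set V) (i j : V) (p : List V) : Prop :=
  p.IsChain G.adj ∧ p.head? = some i ∧ p.getLast? = some j ∧ G.innerOK C p

lemma mConnectingWalk_append_cons {l₁ l₂ : List V} :
    G.mConnectingWalk C i j (l₁ ++ x :: l₂) ↔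
      G.mConnectingWalk C i x (l₁ ++ [x]) ∧ G.mConnectingWalk C x j (x :: l₂) ∧
        ∀ w ∈ l₁.getLast?, ∀ y ∈ l₂.head?, G.tripleOK C w x y := by
  have hhead : (l₁ ++ x :: l₂).head? = (l₁ ++ [x]).head? := by cases l₁ <;> rfl
  rw [mConnectingWalk, mConnectingWalk, mConnectingWalk, List.isChain_split,
    innerOK_append_cons l₁ x l₂, hhead, List.getLast?_append_cons]
  simp only [List.getLast?_concat, List.head?_cons]
  tauto

lemma mConnectingWalk_pair : G.mConnectingWalk C i j [i, j] ↔ G.adj i j := by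
  simp [mConnectingWalk, innerOK]

lemma mConnectingWalk.reverse {p : List V} (h : G.mConnectingWalk C i j p) :
    G.mConnectingWalk C j i p.reverse := by
  obtain ⟨hch, hi, hj, hok⟩ := h
  refine ⟨List.isChain_reverse.2 (hch.imp fun _ _ => adj_symm), ?_, ?_, innerOK_reverse hok⟩
  · rwa [List.head?_reverse]
  · rwa [List.getLast?_reverse]

lemma mConnectingWalk.replace {u m v : List V}
    (hp : G.mConnectingWalk C i j (u ++ a :: b :: c :: v))
    (hm : G.mConnectingWalk C a c (a :: m ++ [c]))
    (hl : ∀ w ∈ u.getLast?, ∀ e ∈ (m ++ [c]).head?, G.tripleOK C w a b → G.tripleOK C w a e)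
    (hr : ∀ e ∈ (a :: m).getLast?, ∀ y ∈ v.head?, G.tripleOK C b c y → G.tripleOK C e c y) :
    G.mConnectingWalk C i j (u ++ a :: (m ++ c :: v)) := by
  obtain ⟨hu, habcv, hub⟩ := mConnectingWalk_append_cons.1 hp
  obtain ⟨-, hcv, hbv⟩ :=
    (mConnectingWalk_append_cons (l₁ := [a, b]) (x := c) (l₂ := v)).1 habcv
  refine mConnectingWalk_append_cons.2 ⟨hu, ?_, fun w hw e he => hl w hw e ?_ (hub w hw b rfl)⟩
  · rw [← List.cons_append]
    exact mConnectingWalk_append_cons.2 ⟨hm, hcv, fun e he y hy => hr e he y hy (hbv b rfl y hy)⟩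
  · cases m <;> simpa using he

lemma mConnectingWalk.shortcut {u v : List V}
    (hp : G.mConnectingWalk C i j (u ++ a :: b :: c :: v)) (hac : G.adj a c)
    (hl : ∀ w ∈ u.getLast?, G.tripleOK C w a b → G.tripleOK C w a c)
    (hr : ∀ y ∈ v.head?, G.tripleOK C b c y → G.tripleOK C a c y) :
    G.mConnectingWalk C i j (u ++ a :: c :: v) :=
  hp.replace (m := []) (mConnectingWalk_pair.2 hac) (by simpa using hl) (by simpa using hr)

lemma mConnectingWalk.replace_single {u v : List V}
    (hp : G.mConnectingWalk C i j (u ++ a :: b :: c :: v))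
    (had : G.adj a d) (hdc : G.adj d c) (hadc : G.tripleOK C a d c)
    (hl : ∀ w ∈ u.getLast?, G.tripleOK C w a b → G.tripleOK C w a d)
    (hr : ∀ y ∈ v.head?, G.tripleOK C b c y → G.tripleOK C d c y) :
    G.mConnectingWalk C i j (u ++ a :: d :: c :: v) := by
  refine hp.replace (m := [d]) ?_ (by simpa using hl) (by simpa using hr)
  exact ⟨by simp [had, hdc], rfl, rfl, by simpa [innerOK_cons_cons, innerOK] using hadc⟩

lemma mConnectingWalk.adj_and_tripleOK {u v : List V}
    (hp : G.mConnectingWalk C i j (u ++ a :: b :: c :: v)) :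
    G.adj a b ∧ G.adj b c ∧ (∀ w ∈ u.getLast?, G.tripleOK C w a b) ∧ G.tripleOK C a b c ∧
      ∀ y ∈ v.head?, G.tripleOK C b c y := by
  obtain ⟨-, habcv, hl⟩ := mConnectingWalk_append_cons.1 hp
  obtain ⟨habc, -, hr⟩ := (mConnectingWalk_append_cons (l₁ := [a, b]) (x := c) (l₂ := v)).1 habcv
  obtain ⟨hch, -, -, hok⟩ := habc
  simp only [List.cons_append, List.nil_append, List.isChain_cons_cons, innerOK_cons_cons]
    at hch hok
  exact ⟨hch.1, hch.2.1, fun w hw => hl w hw b rfl, hok.1 c rfl, hr b rfl⟩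

lemma exists_not_tripleOK_of_not_innerOK : ∀ {p : List V}, ¬ G.innerOK C p →
    ∃ u a b c v, p = u ++ a :: b :: c :: v ∧ ¬ G.tripleOK C a b c
  | [], h | [_], h => (h trivial).elim
  | a :: b :: l, h => by
    rw [innerOK_cons_cons, not_and_or, not_forall] at h
    rcases h with ⟨c, h⟩ | h
    · obtain ⟨hc, hbad⟩ := Classical.not_imp.1 h
      cases l with
      | nil => simp at hc
      | cons c' v =>
        obtain rfl : c' = c := Option.some.inj hc
        exact ⟨[], a, b, c', v, rfl, hbad⟩
    · obtain ⟨u, a', b', c', v, hbl, hbad⟩ := exists_not_tripleOK_of_not_innerOK h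
      exact ⟨a :: u, a', b', c', v, by rw [hbl, List.cons_append], hbad⟩

lemma mConnectingWalk.mConnecting {p : List V} (hp : G.mConnectingWalk C i j p) (hnd : p.Nodup)
    (hij : i ≠ j) : G.mConnecting C i j p := by
  refine ⟨⟨hnd, hp.1⟩, ?_, hp.2⟩
  match p, hp with
  | [], hp => simp [mConnectingWalk] at hp
  | [_], ⟨_, hi, hj, _⟩ => exact (hij (Option.some.inj (hi.symm.trans hj))).elim
  | _ :: _ :: _, _ => simp

lemma mConnectingWalk.exists_anc_or_transGen (hG : G.isDAG) :
    ∀ {a b : V} {l : List V}, G.mConnectingWalk C a z (a :: b :: l) → G.arrow a b →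
      (∃ x ∈ C, G.anc a x) ∨ TransGen G.arrow a z
  | a, b, [], hp, hab => by
    obtain rfl : b = z := by simpa using hp.2.2.1
    exact .inr (.single hab)
  | a, b, c :: l, hp, hab => by
    obtain ⟨-, hbl, habc⟩ := (mConnectingWalk_append_cons (l₁ := [a]) (x := b)).1 hp
    have hok : G.tripleOK C a b c := habc a rfl c rfl
    by_cases hcol : G.collider a b c
    · left
      rcases hok.1 hcol with hb | ⟨x, hx, hbx⟩
      exacts [⟨b, hb, .single hab⟩, ⟨x, hx, .head hab hbx⟩]
    · have hbc : G.arrow b c := hG.arrow_of_adj (List.isChain_cons_cons.1 hbl.1).1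
        fun hcb => hcol ⟨(hG.headAt_iff).2 hab, (hG.headAt_iff).2 hcb⟩
      rcases hbl.exists_anc_or_transGen hG hbc with ⟨x, hx, hbx⟩ | hbz
      exacts [.inl ⟨x, hx, .head hab hbx⟩, .inr (.head hab hbz)]

/-- The junction left at `x` after cutting a loop `x, b, …, b', x` out of a walk. -/
lemma tripleOK_of_tripleOK_of_tripleOK {b' : V} (hw : G.tripleOK C w x b)
    (hy : G.tripleOK C b' x y) (hb : ¬ G.headAt b x → ∃ z ∈ C, G.anc x z) :
    G.tripleOK C w x y := by
  refine ⟨fun hcol => ?_, fun hcol => ?_⟩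
  · by_cases hbx : G.headAt b x
    · exact hw.1 ⟨hcol.1, hbx⟩
    · exact .inr (hb hbx)
  · by_cases hwx : G.headAt w x
    · exact hy.2 fun h => hcol ⟨hwx, h.2⟩
    · exact hw.2 fun h => hwx h.1

lemma mConnectingWalk.cut (hG : G.isDAG) {e m f : List V}
    (hp : G.mConnectingWalk C i j (e ++ x :: (m ++ x :: f))) :
    G.mConnectingWalk C i j (e ++ x :: f) := by
  obtain ⟨hex, hloop, hjunction⟩ := mConnectingWalk_append_cons.1 hp
  obtain ⟨hxmx, hxf, hjunction'⟩ :=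
    (mConnectingWalk_append_cons (l₁ := x :: m) (x := x) (l₂ := f)).1 hloop
  obtain ⟨b, m, rfl⟩ : ∃ b m', m = b :: m' := by
    refine List.exists_cons_of_ne_nil ?_
    rintro rfl
    exact adj_irrefl x (mConnectingWalk_pair.1 hxmx)
  obtain ⟨b', hb'⟩ : ∃ b', (x :: b :: m).getLast? = some b' :=
    ⟨_, List.getLast?_eq_some_getLast (List.cons_ne_nil x _)⟩
  refine mConnectingWalk_append_cons.2 ⟨hex, hxf, fun w hw y hy =>
    tripleOK_of_tripleOK_of_tripleOK (hjunction w hw b rfl) (hjunction' b' hb' y hy) fun hbx => ?_⟩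
  have hxb : G.arrow x b := hG.arrow_of_adj (List.isChain_cons_cons.1 hxmx.1).1
    fun h => hbx ((hG.headAt_iff).2 h)
  exact (hxmx.exists_anc_or_transGen hG hxb).resolve_right (hG.2.2 x)

lemma mConnecting.mConnectingWalk {p : List V} (hp : G.mConnecting C i j p) :
    G.mConnectingWalk C i j p :=
  ⟨hp.1.2, hp.2.2.1, hp.2.2.2.1, hp.2.2.2.2⟩

lemma mConnecting.ne_of_eq_append {p u v : List V} (hp : G.mConnecting C i j p)
    (hpu : p = u ++ a :: b :: c :: v) : b ≠ i ∧ b ≠ j := by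
  obtain ⟨⟨hnd, -⟩, -, hi, hj, -⟩ := hp
  subst hpu
  have hi' : i ∈ u ++ [a] := List.mem_of_mem_head? (by cases u <;> simpa using hi)
  have hj' : j ∈ c :: v := List.mem_of_mem_getLast? (by
    rwa [show u ++ a :: b :: c :: v = (u ++ [a, b]) ++ c :: v by simp,
      List.getLast?_append_cons] at hj)
  rw [show u ++ a :: b :: c :: v = (u ++ [a]) ++ b :: c :: v by simp, List.nodup_middle,
    List.nodup_cons, List.mem_append, not_or] at hnd
  exact ⟨fun h => hnd.1.1 (h ▸ hi'), fun h => hnd.1.2 (h ▸ hj')⟩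

def ancSeparator (G : MixedGraph V) (i j : V) : Set V :=
  {v | (G.anc v i ∨ G.anc v j) ∧ v ≠ i ∧ v ≠ j}

lemma anc_of_anc_mem_ancSeparator (h : ∃ x ∈ G.ancSeparator i j, G.anc b x) :
    G.anc b i ∨ G.anc b j := by
  obtain ⟨x, ⟨hx | hx, -⟩, hbx⟩ := h
  exacts [.inl (hbx.trans hx), .inr (hbx.trans hx)]

/-- A non-collider would start a directed path towards an end point or towards a collider, and
would therefore be one of the separating ancestors. -/
lemma isDAG.collider_of_mConnecting_ancSeparator (hG : G.isDAG) {p u v : List V}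
    (hp : G.mConnecting (G.ancSeparator i j) i j p) (hpu : p = u ++ a :: b :: c :: v) :
    G.collider a b c ∧ (G.anc b i ∨ G.anc b j) := by
  have hw := hp.mConnectingWalk
  obtain ⟨hbi, hbj⟩ := hp.ne_of_eq_append hpu
  have hab : G.adj a b :=
    (List.isChain_cons_cons.1 (hw.1.infix (l₁ := [a, b]) ⟨u, c :: v, by simp [hpu]⟩)).1
  rw [hpu, show u ++ a :: b :: c :: v = (u ++ [a]) ++ b :: c :: v by simp] at hw
  obtain ⟨hib, hbj', hok⟩ := mConnectingWalk_append_cons.1 hw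
  have habc : G.tripleOK (G.ancSeparator i j) a b c := hok a (by simp) c rfl
  have hanc_of : (∃ x ∈ G.ancSeparator i j, G.anc b x) ∨ G.anc b i ∨ G.anc b j →
      G.anc b i ∨ G.anc b j := fun h => h.elim anc_of_anc_mem_ancSeparator id
  by_cases hcol : G.collider a b c
  · refine ⟨hcol, hanc_of ?_⟩
    rcases habc.1 hcol with hb | hb
    exacts [.inr hb.1, .inl hb]
  · refine (habc.2 hcol ⟨hanc_of ?_, hbi, hbj⟩).elim
    by_cases hcb : G.headAt c b
    · have hba : G.arrow b a := hG.arrow_of_adj (adj_symm hab)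
        fun h => hcol ⟨(hG.headAt_iff).2 h, hcb⟩
      have hbi' : G.mConnectingWalk (G.ancSeparator i j) b i (b :: a :: u.reverse) := by
        simpa using hib.reverse
      exact (hbi'.exists_anc_or_transGen hG hba).imp id fun h => .inl h.to_reflTransGen
    · have hbc : G.arrow b c := hG.arrow_of_adj (List.isChain_cons_cons.1 hbj'.1).1
        fun h => hcb ((hG.headAt_iff).2 h)
      exact (hbj'.exists_anc_or_transGen hG hbc).imp id fun h => .inr h.to_reflTransGen

lemma isDAG.mSep_ancSeparator (hG : G.isDAG) (hna : ¬ G.adj i j) :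
    G.mSep {i} {j} (G.ancSeparator i j) := by
  rintro ⟨_, _, p, rfl, rfl, hp⟩
  have ⟨⟨_, hch⟩, hlen, hi, hj, _⟩ := hp
  match p, hlen with
  | [_, _], _ =>
    obtain ⟨rfl, rfl⟩ : _ ∧ _ := ⟨Option.some.inj hi, Option.some.inj hj⟩
    exact hna (List.isChain_cons_cons.1 hch).1
  | [_, b, _], _ =>
    obtain ⟨rfl, rfl⟩ : _ ∧ _ := ⟨Option.some.inj hi, Option.some.inj hj⟩
    obtain ⟨hcol, hb⟩ := hG.collider_of_mConnecting_ancSeparator hp (u := []) (v := []) rfl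
    rw [hG.collider_iff] at hcol
    exact hb.elim (hG.not_anc_of_arrow hcol.1) (hG.not_anc_of_arrow hcol.2)
  | _ :: b :: c :: d :: l, _ =>
    have h₁ := (hG.collider_iff).1 (hG.collider_of_mConnecting_ancSeparator hp (u := []) rfl).1
    have h₂ := (hG.collider_iff).1 (hG.collider_of_mConnecting_ancSeparator hp (u := [_]) rfl).1
    exact hG.arrow_asymm h₁.2 h₂.1

lemma markovEquiv.symm (h : G₁.markovEquiv G₂) : G₂.markovEquiv G₁ :=
  fun A B C hAB hAC hBC => (h A B C hAB hAC hBC).symm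

lemma mSep_ancSeparator_of_markovEquiv (h : G₁.markovEquiv G₂) (h₂ : G₂.isDAG) (hij : i ≠ j)
    (hna : ¬ G₂.adj i j) : G₁.mSep {i} {j} (G₂.ancSeparator i j) :=
  (h _ _ _ (Set.disjoint_singleton.2 hij) (Set.disjoint_singleton_left.2 fun h => h.2.1 rfl)
    (Set.disjoint_singleton_left.2 fun h => h.2.2 rfl)).2 (h₂.mSep_ancSeparator hna)

lemma adj_of_markovEquiv (h : G₁.markovEquiv G₂) (h₂ : G₂.isDAG) (hadj : G₁.adj i j) :
    G₂.adj i j := by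
  by_contra hna
  have hij : i ≠ j := by rintro rfl; exact adj_irrefl i hadj
  exact mSep_ancSeparator_of_markovEquiv h h₂ hij hna
    ⟨i, j, [i, j], rfl, rfl, ⟨by simp [hij], .cons_cons hadj (.singleton j)⟩, le_rfl, rfl, rfl,
      trivial⟩

lemma unshieldedCollision_of_markovEquiv (h : G₁.markovEquiv G₂) (h₂ : G₂.isDAG)
    (hsk : G₁.sameSkeleton G₂) (hijk : G₁.unshieldedCollision i j k) :
    G₂.unshieldedCollision i j k := by
  obtain ⟨hij, hkj, hik, hna⟩ := hijk
  have hna₂ : ¬ G₂.adj i k := fun h => hna ((hsk i k).2 h)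
  have hij' : i ≠ j := fun h => G₁.arrow_irrefl i (h ▸ hij)
  have hkj' : k ≠ j := fun h => G₁.arrow_irrefl k (h ▸ hkj)
  -- the collider `j` would become an ancestor of `i` or `k` in `G₂`, making `i, j, k` connecting
  have hj : j ∉ G₂.ancSeparator i k := fun hj =>
    mSep_ancSeparator_of_markovEquiv h h₂ hik hna₂ ⟨i, k, [i, j, k], rfl, rfl,
      ⟨by simp [hij', hik, hkj'.symm], .cons_cons (adj_of_arrow hij)
        (.cons_cons (adj_of_arrow_rev hkj) (.singleton k))⟩, Nat.le_succ 2, rfl, rfl,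
      ⟨fun _ => .inl hj, fun hn => (hn ⟨.inl hij, .inl hkj⟩).elim⟩, trivial⟩
  refine ⟨h₂.arrow_of_adj ((hsk i j).1 (adj_of_arrow hij)) fun hji => hj ?_,
    h₂.arrow_of_adj ((hsk k j).1 (adj_of_arrow hkj)) fun hjk => hj ?_, hik, hna₂⟩
  exacts [⟨.inl (.single hji), hij'.symm, hkj'.symm⟩, ⟨.inr (.single hjk), hij'.symm, hkj'.symm⟩]

def sameUnshieldedCollisions (G₁ G₂ : MixedGraph V) : Prop :=
  ∀ i j k, G₁.unshieldedCollision i j k ↔ G₂.unshieldedCollision i j k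

lemma sameSkeleton.symm (h : G₁.sameSkeleton G₂) : G₂.sameSkeleton G₁ :=
  fun i j => (h i j).symm

lemma sameUnshieldedCollisions.symm (h : G₁.sameUnshieldedCollisions G₂) :
    G₂.sameUnshieldedCollisions G₁ :=
  fun i j k => (h i j k).symm

/-- Otherwise `e → b ← d` would be an unshielded collision of `G₂` but not of `G₁`. -/
lemma arrow_of_arrow_of_reversed (h₁ : G₁.isDAG) (hsk : G₁.sameSkeleton G₂)
    (huc : G₁.sameUnshieldedCollisions G₂) (heb₁ : G₁.arrow e b) (heb₂ : G₂.arrow e b)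
    (hbd : G₁.arrow b d) (hdb : G₂.arrow d b) : G₁.arrow e d := by
  have hed : e ≠ d := by rintro rfl; exact h₁.arrow_asymm heb₁ hbd
  have hadj : G₁.adj e d := by
    by_contra hna
    exact h₁.arrow_asymm hbd ((huc e b d).2 ⟨heb₂, hdb, hed, fun h => hna ((hsk e d).2 h)⟩).2.1
  exact h₁.arrow_of_adj_of_arrow_of_arrow hadj heb₁ hbd

def reachesIn (G : MixedGraph V) (C : Set V) : ℕ → V → Prop
  | 0, b => b ∈ C
  | n + 1, b => ∃ d, G.arrow b d ∧ G.reachesIn C n d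

/-- Shortest directed distance from `b` into `C`; `0` also when `b` is not an ancestor of `C`. -/
noncomputable def arrowDist (G : MixedGraph V) (C : Set V) (b : V) : ℕ :=
  sInf {n | G.reachesIn C n b}

lemma exists_reachesIn_iff : (∃ n, G.reachesIn C n b) ↔ ∃ x ∈ C, G.anc b x := by
  constructor
  · rintro ⟨n, hn⟩
    induction n generalizing b with
    | zero => exact ⟨b, hn, .refl⟩
    | succ n ih =>
      obtain ⟨d, hbd, hd⟩ := hn
      obtain ⟨x, hx, hdx⟩ := ih hd
      exact ⟨x, hx, .head hbd hdx⟩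
  · rintro ⟨x, hx, hbx⟩
    induction hbx using ReflTransGen.head_induction_on with
    | refl => exact ⟨0, hx⟩
    | head hbd _ ih =>
      obtain ⟨n, hn⟩ := ih
      exact ⟨n + 1, _, hbd, hn⟩

lemma arrowDist_le {n : ℕ} (h : G.reachesIn C n b) : G.arrowDist C b ≤ n :=
  Nat.sInf_le h

lemma reachesIn_arrowDist (h : ∃ x ∈ C, G.anc b x) : G.reachesIn C (G.arrowDist C b) b :=
  Nat.sInf_mem (exists_reachesIn_iff.2 h)

lemma arrowDist_le_succ (hbd : G.arrow b d) (hd : ∃ x ∈ C, G.anc d x) :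
    G.arrowDist C b ≤ G.arrowDist C d + 1 :=
  arrowDist_le ⟨d, hbd, reachesIn_arrowDist hd⟩

lemma exists_arrow_arrowDist_lt (h : ∃ x ∈ C, G.anc b x) (hb : b ∉ C) :
    ∃ d, G.arrow b d ∧ (∃ x ∈ C, G.anc d x) ∧ G.arrowDist C d < G.arrowDist C b := by
  have hreach := reachesIn_arrowDist h
  cases hn : G.arrowDist C b with
  | zero => rw [hn] at hreach; exact absurd hreach hb
  | succ n =>
    rw [hn] at hreach
    obtain ⟨d, hbd, hd⟩ := hreach
    exact ⟨d, hbd, exists_reachesIn_iff.1 ⟨n, hd⟩, Nat.lt_succ_of_le (arrowDist_le hd)⟩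

/-- The first arrow of a shortest directed path from `b` into `C` is the reversed one: were it
kept, the reversed arrow further down could be shielded by `arrow_of_arrow_of_reversed`, giving a
shorter path. -/
lemma exists_reversed_of_not_anc (h₁ : G₁.isDAG) (h₂ : G₂.isDAG) (hsk : G₁.sameSkeleton G₂)
    (huc : G₁.sameUnshieldedCollisions G₂) (hb₁ : ∃ x ∈ C, G₁.anc b x)
    (hb₂ : ¬ ∃ x ∈ C, G₂.anc b x) :
    ∃ d, G₁.arrow b d ∧ G₂.arrow d b ∧ (∃ x ∈ C, G₁.anc d x) ∧
      G₁.arrowDist C d < G₁.arrowDist C b := by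
  induction hn : G₁.arrowDist C b using Nat.strong_induction_on generalizing b with
  | _ n ih =>
    obtain ⟨d, hbd, hd, hdist⟩ :=
      exists_arrow_arrowDist_lt hb₁ fun hb => hb₂ ⟨b, hb, .refl⟩
    by_cases hbd₂ : G₂.arrow b d
    · obtain ⟨d', hdd', hd'd, hd', hdist'⟩ :=
        ih _ (hn ▸ hdist) hd (fun ⟨x, hx, hdx⟩ => hb₂ ⟨x, hx, .head hbd₂ hdx⟩) rfl
      have hbd' := arrow_of_arrow_of_reversed h₁ hsk huc hbd hbd₂ hdd' hd'd
      have := arrowDist_le_succ hbd' hd'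
      omega
    · exact ⟨d, hbd, h₂.arrow_of_adj (adj_symm ((hsk b d).1 (adj_of_arrow hbd))) hbd₂, hd,
        hn ▸ hdist⟩

noncomputable def walkCost (G : MixedGraph V) (C : Set V) (p : List V) : ℕ :=
  (p.map (G.arrowDist C)).sum

def walkLT (G : MixedGraph V) (C : Set V) (q p : List V) : Prop :=
  q.length < p.length ∨ q.length = p.length ∧ G.walkCost C q < G.walkCost C p

lemma walkLT_reverse {p q : List V} : G.walkLT C q.reverse p.reverse ↔ G.walkLT C q p := by
  simp [walkLT, walkCost, List.map_reverse, List.sum_reverse]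

/-- A shielded collider is skipped; an unshielded one is moved one step down a shortest directed
path into `C`, to a node that both its neighbours point to by `arrow_of_arrow_of_reversed`. -/
lemma exists_walkLT_of_collider (h₁ : G₁.isDAG) (h₂ : G₂.isDAG) (hsk : G₁.sameSkeleton G₂)
    (huc : G₁.sameUnshieldedCollisions G₂) {u v : List V}
    (hp : G₁.mConnectingWalk C i j (u ++ a :: b :: c :: v)) (hac : a ≠ c)
    (hcol : G₁.collider a b c) (hbad : ¬ G₂.tripleOK C a b c) :
    ∃ q, G₁.mConnectingWalk C i j q ∧ G₁.walkLT C q (u ++ a :: b :: c :: v) := by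
  obtain ⟨-, -, hl, hok, hr⟩ := hp.adj_and_tripleOK
  have hb : ∃ x ∈ C, G₁.anc b x := (hok.1 hcol).elim (fun hb => ⟨b, hb, .refl⟩) id
  rw [h₁.collider_iff] at hcol
  obtain ⟨hab, hcb⟩ := hcol
  by_cases hadj : G₁.adj a c
  · refine ⟨_, hp.shortcut hadj (fun w _ h => ?_) (fun y _ h => ?_), .inl (by simp)⟩
    · exact tripleOK_of_anc h (h₁.not_headAt_of_arrow hab) (hb.imp fun _ => .imp_right (.head hab))
    · exact tripleOK_comm.2 (tripleOK_of_anc (tripleOK_comm.1 h) (h₁.not_headAt_of_arrow hcb)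
        (hb.imp fun _ => .imp_right (.head hcb)))
  · obtain ⟨hab₂, hcb₂, -⟩ := (huc a b c).1 ⟨hab, hcb, hac, hadj⟩
    obtain ⟨d, hbd, hdb, hd, hdist⟩ := exists_reversed_of_not_anc h₁ h₂ hsk huc hb
      fun h => hbad (tripleOK_of_collider ⟨.inl hab₂, .inl hcb₂⟩ h)
    have had := arrow_of_arrow_of_reversed h₁ hsk huc hab hab₂ hbd hdb
    have hcd := arrow_of_arrow_of_reversed h₁ hsk huc hcb hcb₂ hbd hdb
    refine ⟨u ++ a :: d :: c :: v, hp.replace_single (adj_of_arrow had) (adj_of_arrow_rev hcd)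
      (tripleOK_of_collider (h₁.collider_iff.2 ⟨had, hcd⟩) hd) (fun w _ h => ?_) (fun y _ h => ?_),
      .inr ⟨by simp, by simp [walkCost]; omega⟩⟩
    · exact tripleOK_congr h
        (iff_of_false (h₁.not_headAt_of_arrow had) (h₁.not_headAt_of_arrow hab))
    · exact tripleOK_comm.2 (tripleOK_congr (tripleOK_comm.1 h)
        (iff_of_false (h₁.not_headAt_of_arrow hcd) (h₁.not_headAt_of_arrow hcb)))

/-- The triple is shielded and `b → c`, so `b` can be skipped, unless `a ∈ C`: then `a` is a
collider of `G₁` and is skipped instead. -/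
lemma exists_walkLT_of_not_collider_of_arrow (h₁ : G₁.isDAG) (h₂ : G₂.isDAG)
    (huc : G₁.sameUnshieldedCollisions G₂) {u v : List V} (hiC : i ∉ C)
    (hnd : (u ++ a :: b :: c :: v).Nodup) (hp : G₁.mConnectingWalk C i j (u ++ a :: b :: c :: v))
    (hcol : ¬ G₁.collider a b c) (hbC : b ∉ C) (hcol₂ : G₂.collider a b c)
    (hac : G₁.arrow a c) :
    ∃ q, G₁.mConnectingWalk C i j q ∧ G₁.walkLT C q (u ++ a :: b :: c :: v) := by
  obtain ⟨hab, hbc, hl, -, -⟩ := hp.adj_and_tripleOK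
  obtain ⟨hab₂, -⟩ := h₂.collider_iff.1 hcol₂
  have hbc₁ : G₁.arrow b c := h₁.arrow_of_adj hbc fun hcb =>
    have hba := h₁.arrow_of_adj (adj_symm hab) fun hab => hcol (h₁.collider_iff.2 ⟨hab, hcb⟩)
    h₁.2.2 c (.head hcb (.head hba (.single hac)))
  by_cases haC : a ∈ C
  · obtain ⟨u, w, rfl⟩ : ∃ u' w, u = u' ++ [w] := by
      refine (List.eq_nil_or_concat' u).resolve_left ?_
      rintro rfl
      obtain rfl : a = i := by simpa using hp.2.1
      exact hiC haC
    obtain ⟨hwa, hba⟩ := h₁.collider_iff.1 (by_contra fun h => (hl w (by simp)).2 h haC)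
    have hwb : G₁.adj w b := by
      by_contra hna
      have hwb : w ≠ b := by rintro rfl; simp [List.nodup_append] at hnd
      exact h₂.arrow_asymm hab₂ ((huc w a b).1 ⟨hwa, hba, hwb, hna⟩).2.1
    rw [List.append_assoc, List.singleton_append] at hp ⊢
    refine ⟨_, hp.shortcut (v := c :: v) hwb (fun w' _ h => ?_) (fun y hy _ => ?_), .inl (by simp)⟩
    · exact tripleOK_of_anc h (h₁.not_headAt_of_arrow hwa) ⟨a, haC, .single hwa⟩
    · obtain rfl : y = c := (Option.some.inj hy).symm
      exact tripleOK_of_not_headAt (h₁.not_headAt_of_arrow hbc₁) hbC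
  · refine ⟨_, hp.shortcut (adj_of_arrow hac) (fun w _ _ => ?_) (fun y _ h => ?_), .inl (by simp)⟩
    · exact tripleOK_of_not_headAt (h₁.not_headAt_of_arrow hac) haC
    · exact tripleOK_comm.2 (tripleOK_congr (tripleOK_comm.1 h)
        (iff_of_true ((h₁.headAt_iff).2 hac) ((h₁.headAt_iff).2 hbc₁)))

lemma exists_walkLT_of_not_tripleOK (h₁ : G₁.isDAG) (h₂ : G₂.isDAG) (hsk : G₁.sameSkeleton G₂)
    (huc : G₁.sameUnshieldedCollisions G₂) {p u v : List V} (hiC : i ∉ C) (hjC : j ∉ C)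
    (hnd : p.Nodup) (hp : G₁.mConnectingWalk C i j p) (hpu : p = u ++ a :: b :: c :: v)
    (hbad : ¬ G₂.tripleOK C a b c) :
    ∃ q, G₁.mConnectingWalk C i j q ∧ G₁.walkLT C q p := by
  subst hpu
  have hac : a ≠ c := by rintro rfl; simp [List.nodup_append] at hnd
  by_cases hcol : G₁.collider a b c
  · exact exists_walkLT_of_collider h₁ h₂ hsk huc hp hac hcol hbad
  have hbC : b ∉ C := (hp.adj_and_tripleOK.2.2.2.1).2 hcol
  have hcol₂ : G₂.collider a b c := by_contra fun h => hbad ⟨fun h' => (h h').elim, fun _ => hbC⟩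
  have hadj : G₁.adj a c := by
    by_contra hna
    obtain ⟨hab₂, hcb₂⟩ := h₂.collider_iff.1 hcol₂
    obtain ⟨hab, hcb, -⟩ := (huc a b c).2 ⟨hab₂, hcb₂, hac, fun h => hna ((hsk a c).2 h)⟩
    exact hcol (h₁.collider_iff.2 ⟨hab, hcb⟩)
  rcases h₁.adj_iff.1 hadj with hac₁ | hca₁
  · exact exists_walkLT_of_not_collider_of_arrow h₁ h₂ huc hiC hnd hp hcol hbC hcol₂ hac₁
  · have hrev : (u ++ a :: b :: c :: v).reverse = v.reverse ++ c :: b :: a :: u.reverse := by simp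
    obtain ⟨q, hq, hlt⟩ := exists_walkLT_of_not_collider_of_arrow h₁ h₂ huc hjC
      (hrev ▸ List.nodup_reverse.2 hnd) (hrev ▸ hp.reverse) (collider_comm.not.1 hcol) hbC
      (collider_comm.1 hcol₂) hca₁
    exact ⟨q.reverse, hq.reverse, walkLT_reverse.1 (by simpa [hrev] using hlt)⟩

lemma exists_mConnecting_of_mConnectingWalk (h₁ : G₁.isDAG) (h₂ : G₂.isDAG)
    (hsk : G₁.sameSkeleton G₂) (huc : G₁.sameUnshieldedCollisions G₂) (hij : i ≠ j)
    (hiC : i ∉ C) (hjC : j ∉ C) (p : List V) (hp : G₁.mConnectingWalk C i j p) :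
    ∃ q, G₂.mConnecting C i j q := by
  by_cases hnd : p.Nodup
  · by_cases hok : G₂.innerOK C p
    · exact ⟨p, mConnectingWalk.mConnecting
        ⟨hp.1.imp fun x y => (hsk x y).1, hp.2.1, hp.2.2.1, hok⟩ hnd hij⟩
    · obtain ⟨u, a, b, c, v, hpu, hbad⟩ := exists_not_tripleOK_of_not_innerOK hok
      obtain ⟨q, hq, hlt⟩ := exists_walkLT_of_not_tripleOK h₁ h₂ hsk huc hiC hjC hnd hp hpu hbad
      exact exists_mConnecting_of_mConnectingWalk h₁ h₂ hsk huc hij hiC hjC q hq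
  · obtain ⟨e, x, m, f, rfl⟩ := List.exists_eq_append_cons_append_cons_of_not_nodup hnd
    exact exists_mConnecting_of_mConnectingWalk h₁ h₂ hsk huc hij hiC hjC _ (hp.cut h₁)
termination_by (p.length, G₁.walkCost C p)
decreasing_by
  · exact Prod.lex_def.2 hlt
  · subst_vars
    exact Prod.Lex.left _ _ (by simp)

lemma mSep_of_sameSkeleton (h₁ : G₁.isDAG) (h₂ : G₂.isDAG) (hsk : G₁.sameSkeleton G₂)
    (huc : G₁.sameUnshieldedCollisions G₂) {A B C : Set V} (hAB : Disjoint A B)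
    (hAC : Disjoint A C) (hBC : Disjoint B C) (h : G₂.mSep A B C) : G₁.mSep A B C := by
  rintro ⟨i, j, p, hi, hj, hp⟩
  obtain ⟨q, hq⟩ := exists_mConnecting_of_mConnectingWalk h₁ h₂ hsk huc (hAB.ne_of_mem hi hj)
    (Set.disjoint_left.1 hAC hi) (Set.disjoint_left.1 hBC hj) p hp.mConnectingWalk
  exact h ⟨i, j, q, hi, hj, hq⟩

lemma markovEquiv_of_sameSkeleton (h₁ : G₁.isDAG) (h₂ : G₂.isDAG) (hsk : G₁.sameSkeleton G₂)
    (huc : G₁.sameUnshieldedCollisions G₂) : G₁.markovEquiv G₂ :=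
  fun _ _ _ hAB hAC hBC => ⟨mSep_of_sameSkeleton h₂ h₁ hsk.symm huc.symm hAB hAC hBC,
    mSep_of_sameSkeleton h₁ h₂ hsk huc hAB hAC hBC⟩

end MixedGraph

theorem dag_markovEquiv_iff_general {V : Type*} (G₁ G₂ : MixedGraph V)
    (h₁ : G₁.isDAG) (h₂ : G₂.isDAG) :
    G₁.markovEquiv G₂ ↔
      (G₁.sameSkeleton G₂ ∧
        ∀ i j k, G₁.unshieldedCollision i j k ↔ G₂.unshieldedCollision i j k) := by
  refine ⟨fun h => ?_, fun ⟨hsk, huc⟩ => MixedGraph.markovEquiv_of_sameSkeleton h₁ h₂ hsk huc⟩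
  have hsk : G₁.sameSkeleton G₂ := fun _ _ =>
    ⟨MixedGraph.adj_of_markovEquiv h h₂, MixedGraph.adj_of_markovEquiv h.symm h₁⟩
  exact ⟨hsk, fun _ _ _ => ⟨MixedGraph.unshieldedCollision_of_markovEquiv h h₂ hsk,
    MixedGraph.unshieldedCollision_of_markovEquiv h.symm h₁ hsk.symm⟩⟩

/-- Two DAGs are Markov equivalent iff they have the same skeleton and the same
unshielded collision V-configurations. -/
theorem dag_markovEquiv_iff {V : Type*} [Fintype V] (G₁ G₂ : MixedGraph V)
    (h₁ : G₁.isDAG) (h₂ : G₂.isDAG) :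
    G₁.markovEquiv G₂ ↔
      (G₁.sameSkeleton G₂ ∧
        ∀ i j k, G₁.unshieldedCollision i j k ↔ G₂.unshieldedCollision i j k) :=
  dag_markovEquiv_iff_general G₁ G₂ h₁ h₂
end
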